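/- Let N ≥ 3, β ∈ ℝ, R > 0, and h > √2·R, and let V be the electrostatic potential of the 2N unit point charges at the vertices of the β-rotated prism of radius R and height h. Then, besides the origin, there exist two further critical points of V on the x_3-axis: there are z_+ ∈ (0, h/2) and z_− ∈ (−h/2, 0) such that ∇V(0, 0, z_+) = 0 and ∇V(0, 0, z_−) = 0; moreover these two critical points are 1-saddles (their Hessians have exactly one negative eigenvalue). -/

import Mathlib

noncomputable section

open Finset

abbrev E3 := EuclideanSpace ℝ (Fin 3)

/-- The point `(a, b, c)` of `ℝ³`. -/
def pt (a b c : ℝ) : E3 := (WithLp.equiv 2 (Fin 3 → ℝ)).symm ![a, b, c]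

/-- The vertices of a regular `N`-gon of circumradius `R` centered at the origin in
the plane `x₃ = 0`. -/
def vert (N : ℕ) (R : ℝ) (k : Fin N) : E3 :=
  pt (R * Real.cos (2 * Real.pi * (k : ℕ) / N)) (R * Real.sin (2 * Real.pi * (k : ℕ) / N)) 0

/-- The electrostatic potential of unit point charges at the vertices of the `N`-gon. -/
def V0 (N : ℕ) (R : ℝ) : E3 → ℝ :=
  fun x => ∑ k : Fin N, 1 / ‖x - vert N R k‖

/-- The electrostatic potential of the `2N` unit point charges at the vertices of the
`β`-rotated prism of radius `R` and height `h`. -/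
def Vprism (N : ℕ) (R h β : ℝ) : E3 → ℝ :=
  fun x => V0 N R (pt (x 0) (x 1) (x 2 + h / 2)) +
    V0 N R (pt (x 0 * Real.cos β + x 1 * Real.sin β)
      (-(x 0) * Real.sin β + x 1 * Real.cos β) (x 2 - h / 2))

/-- The Hessian of `f` at `x`, as a continuous bilinear form. -/
def hess (f : E3 → ℝ) (x : E3) : E3 →L[ℝ] E3 →L[ℝ] ℝ :=
  fderiv ℝ (fderiv ℝ f) x

/-- Non-degeneracy of the Hessian of `f` at `x`. -/
def Nondeg (f : E3 → ℝ) (x : E3) : Prop :=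
  ∀ v : E3, v ≠ 0 → hess f x v ≠ 0

/-- The Morse index of `f` at `x`: the maximal dimension of a subspace on which the
Hessian of `f` at `x` is negative definite (the number of negative eigenvalues). -/
def morseIndex (f : E3 → ℝ) (x : E3) : ℕ :=
  sSup {k : ℕ | ∃ W : Submodule ℝ E3, Module.finrank ℝ ↥W = k ∧
    ∀ v ∈ W, v ≠ 0 → hess f x v v < 0}


/-!
On the `x₃`-axis each ring of `N ≥ 3` charges acts, up to second order, like a uniformly charged
ring: the sums of `cos θₖ`, `sin θₖ`, `cos 2θₖ`, `sin 2θₖ` over the vertices vanish, so at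
`(0, 0, z)` the gradient is vertical and the Hessian is `c · diag(-1/2, -1/2, 1)` (trace-free, the
potential being harmonic). The vertical field `s / (R² + s²)^{3/2}` of a ring at axial offset `s`
increases up to `s = R/√2` and decreases afterwards, so for `h > √2 R` the intermediate value
theorem gives a point `z ∈ (0, h/2)` where the fields of the two rings balance. An algebraic
identity shows that wherever the fields at two distinct offsets balance, the axial curvature `c`
is negative, so `(0, 0, z)` has Morse index one; `-z` follows by the mirror symmetry `z ↦ -z`.
-/

open Real

section RegularPolygon

variable {N : ℕ}

lemma sum_exp_mul_angle_eq_zero {m : ℕ} (hm : 0 < m) (hmN : m < N) (γ : ℝ) :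
    ∑ k : Fin N, Complex.exp ((m * (2 * π * k / N + γ) : ℝ) * Complex.I) = 0 := by
  have hN : N ≠ 0 := by omega
  set ζ := Complex.exp (2 * π * Complex.I / N)
  have hζ : IsPrimitiveRoot ζ N := Complex.isPrimitiveRoot_exp N hN
  have hterm : ∀ k : Fin N, Complex.exp ((m * (2 * π * k / N + γ) : ℝ) * Complex.I)
      = Complex.exp ((m * γ : ℝ) * Complex.I) * (ζ ^ m) ^ (k : ℕ) := by
    intro k
    rw [← pow_mul, ← Complex.exp_nat_mul, ← Complex.exp_add]
    congr 1
    push_cast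
    field_simp
    ring
  have hgeom : ∑ k ∈ range N, (ζ ^ m) ^ k = 0 := by
    rw [geom_sum_eq (hζ.pow_ne_one_of_pos_of_lt hm.ne' hmN), ← pow_mul, mul_comm, pow_mul,
      hζ.pow_eq_one, one_pow, sub_self, zero_div]
  rw [Fintype.sum_congr _ _ hterm, ← Finset.mul_sum,
    Fin.sum_univ_eq_sum_range (fun k => (ζ ^ m) ^ k), hgeom, mul_zero]

lemma sum_cos_mul_angle {m : ℕ} (hm : 0 < m) (hmN : m < N) (γ : ℝ) :
    ∑ k : Fin N, cos (m * (2 * π * k / N + γ)) = 0 := by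
  simpa only [Complex.re_sum, Complex.exp_ofReal_mul_I_re, Complex.zero_re] using
    congrArg Complex.re (sum_exp_mul_angle_eq_zero hm hmN γ)

lemma sum_sin_mul_angle {m : ℕ} (hm : 0 < m) (hmN : m < N) (γ : ℝ) :
    ∑ k : Fin N, sin (m * (2 * π * k / N + γ)) = 0 := by
  simpa only [Complex.im_sum, Complex.exp_ofReal_mul_I_im, Complex.zero_im] using
    congrArg Complex.im (sum_exp_mul_angle_eq_zero hm hmN γ)

lemma sum_trig_affine (hN : 2 ≤ N) (γ a b c : ℝ) :
    ∑ k : Fin N, (a * cos (2 * π * k / N + γ) + b * sin (2 * π * k / N + γ) + c) = N * c := by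
  have hcos := sum_cos_mul_angle (N := N) one_pos hN γ
  have hsin := sum_sin_mul_angle (N := N) one_pos hN γ
  simp only [Nat.cast_one, one_mul] at hcos hsin
  simp [Finset.sum_add_distrib, ← Finset.mul_sum, hcos, hsin]

lemma sum_trig_affine_mul (hN : 3 ≤ N) (γ a b c a' b' c' : ℝ) :
    ∑ k : Fin N, (a * cos (2 * π * k / N + γ) + b * sin (2 * π * k / N + γ) + c) *
      (a' * cos (2 * π * k / N + γ) + b' * sin (2 * π * k / N + γ) + c')
      = N * ((a * a' + b * b') / 2 + c * c') := by
  have hcos1 := sum_cos_mul_angle (N := N) one_pos (by omega) γ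
  have hsin1 := sum_sin_mul_angle (N := N) one_pos (by omega) γ
  have hcos2 := sum_cos_mul_angle (N := N) two_pos (by omega) γ
  have hsin2 := sum_sin_mul_angle (N := N) two_pos (by omega) γ
  simp only [Nat.cast_one, one_mul, Nat.cast_ofNat] at hcos1 hsin1 hcos2 hsin2
  have hterm : ∀ θ : ℝ, (a * cos θ + b * sin θ + c) * (a' * cos θ + b' * sin θ + c')
      = ((a * a' + b * b') / 2 + c * c') + (a * a' - b * b') / 2 * cos (2 * θ)
        + (a * b' + b * a') / 2 * sin (2 * θ) + (a * c' + c * a') * cos θ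
        + (b * c' + c * b') * sin θ := by
    intro θ
    rw [cos_two_mul, sin_two_mul]
    linear_combination b * b' * sin_sq_add_cos_sq θ
  simp only [hterm, Finset.sum_add_distrib, ← Finset.mul_sum, hcos1, hsin1, hcos2, hsin2,
    Finset.sum_const, Finset.card_univ, Fintype.card_fin, nsmul_eq_mul]
  ring

end RegularPolygon

section AxialProfile

/-- `axialField R s` and `axialCurvature R s` are `-d/ds` and `d²/ds²` of `1/√(R² + s²)`, the
potential on the axis of a charge on a ring of radius `R`, at axial offset `s` from the ring. -/
def axialField (R s : ℝ) : ℝ := s / √(R ^ 2 + s ^ 2) ^ 3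

def axialCurvature (R s : ℝ) : ℝ := (2 * s ^ 2 - R ^ 2) / √(R ^ 2 + s ^ 2) ^ 5

variable {R : ℝ}

lemma axialField_neg (R s : ℝ) : axialField R (-s) = -axialField R s := by
  simp only [axialField, neg_sq, neg_div]

lemma axialCurvature_neg (R s : ℝ) : axialCurvature R (-s) = axialCurvature R s := by
  simp only [axialCurvature, neg_sq]

lemma axialField_reflect (R h z : ℝ) :
    axialField R (-z + h / 2) + axialField R (-z - h / 2)
      = -(axialField R (z + h / 2) + axialField R (z - h / 2)) := by
  rw [show -z + h / 2 = -(z - h / 2) by ring, show -z - h / 2 = -(z + h / 2) by ring,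
    axialField_neg, axialField_neg]
  ring

lemma axialCurvature_reflect (R h z : ℝ) :
    axialCurvature R (-z + h / 2) + axialCurvature R (-z - h / 2)
      = axialCurvature R (z + h / 2) + axialCurvature R (z - h / 2) := by
  rw [show -z + h / 2 = -(z - h / 2) by ring, show -z - h / 2 = -(z + h / 2) by ring,
    axialCurvature_neg, axialCurvature_neg, add_comm]

lemma continuous_axialField (hR : R ≠ 0) : Continuous (axialField R) := by
  refine continuous_id.div (by fun_prop) fun s => ?_
  have : 0 < √(R ^ 2 + s ^ 2) := Real.sqrt_pos.2 (by positivity)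
  positivity

lemma axialField_lt_axialField {u v : ℝ} (hv : 0 < v) (hRv : R ^ 2 ≤ 2 * v ^ 2) (hvu : v < u) :
    axialField R u < axialField R v := by
  have hu : 0 < u := hv.trans hvu
  have hsu : 0 < √(R ^ 2 + u ^ 2) := Real.sqrt_pos.2 (by positivity)
  have hsv : 0 < √(R ^ 2 + v ^ 2) := Real.sqrt_pos.2 (by positivity)
  unfold axialField
  rw [div_lt_div_iff₀ (by positivity) (by positivity)]
  refine lt_of_pow_lt_pow_left₀ 2 (by positivity) ?_
  rw [mul_pow, mul_pow, ← pow_mul, ← pow_mul, mul_comm 3 2, pow_mul, pow_mul,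
    Real.sq_sqrt (by positivity), Real.sq_sqrt (by positivity)]
  have hd : 0 < u ^ 2 - v ^ 2 := by nlinarith
  have hB : 0 < 3 * R ^ 2 * u ^ 2 * v ^ 2 + u ^ 2 * v ^ 2 * (u ^ 2 + v ^ 2) - R ^ 6 := by
    have hmain : 0 ≤ (2 * v ^ 2 - R ^ 2) * (R ^ 2 + v ^ 2) ^ 2 :=
      mul_nonneg (by linarith) (by positivity)
    have hrest : 0 < (u ^ 2 - v ^ 2) * (3 * R ^ 2 * v ^ 2 + 3 * v ^ 4 + v ^ 2 * (u ^ 2 - v ^ 2)) :=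
      mul_pos hd (by positivity)
    linear_combination hmain + hrest
  linear_combination (mul_pos hd hB)

lemma axialCurvature_add_neg_of_axialField_eq {u v : ℝ} (hu : 0 < u) (hv : 0 < v) (huv : u ≠ v)
    (heq : axialField R u = axialField R v) : axialCurvature R u + axialCurvature R v < 0 := by
  unfold axialField at heq
  unfold axialCurvature
  set su := √(R ^ 2 + u ^ 2)
  set sv := √(R ^ 2 + v ^ 2)
  have hsu : 0 < su := Real.sqrt_pos.2 (by positivity)
  have hsv : 0 < sv := Real.sqrt_pos.2 (by positivity)
  have hsu2 : su ^ 2 = R ^ 2 + u ^ 2 := Real.sq_sqrt (by positivity)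
  have hsv2 : sv ^ 2 = R ^ 2 + v ^ 2 := Real.sq_sqrt (by positivity)
  have hbal : u * sv ^ 3 = v * su ^ 3 := by
    rwa [div_eq_div_iff (by positivity) (by positivity)] at heq
  have hsq : su ^ 2 - sv ^ 2 ≠ 0 := by
    rw [hsu2, hsv2, add_sub_add_left_eq_sub, sub_ne_zero]
    exact fun h => huv ((pow_left_inj₀ hu.le hv.le two_ne_zero).1 h)
  have hne : su - sv ≠ 0 := fun h => hsq (by linear_combination (su + sv) * h)
  -- squaring the balance `u sv³ = v su³` and eliminating `u², v²` gives this relation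
  have hrel :
      R ^ 2 * (su ^ 4 + su ^ 2 * sv ^ 2 + sv ^ 4) = su ^ 2 * sv ^ 2 * (su ^ 2 + sv ^ 2) := by
    refine mul_left_cancel₀ hsq ?_
    linear_combination (u * sv ^ 3 + v * su ^ 3) * hbal + sv ^ 6 * hsu2 - su ^ 6 * hsv2
  have hD : 0 < su ^ 4 + su ^ 2 * sv ^ 2 + sv ^ 4 := by positivity
  have hnum : ((2 * u ^ 2 - R ^ 2) * sv ^ 5 + su ^ 5 * (2 * v ^ 2 - R ^ 2))
      * (su ^ 4 + su ^ 2 * sv ^ 2 + sv ^ 4) < 0 := by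
    have hP : 0 < su ^ 2 * sv ^ 2 * (su + sv) * (su - sv) ^ 2
        * (su ^ 4 + su ^ 3 * sv + 3 * su ^ 2 * sv ^ 2 + su * sv ^ 3 + sv ^ 4) := by positivity
    linear_combination (-3 * (su ^ 5 + sv ^ 5)) * hrel
      + (-2 * sv ^ 5 * (su ^ 4 + su ^ 2 * sv ^ 2 + sv ^ 4)) * hsu2
      + (-2 * su ^ 5 * (su ^ 4 + su ^ 2 * sv ^ 2 + sv ^ 4)) * hsv2 + hP
  rw [div_add_div _ _ (by positivity) (by positivity)]
  exact div_neg_of_neg_of_pos (neg_of_mul_neg_left hnum hD.le) (by positivity)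

lemma exists_axialField_add_eq_zero (hR : 0 < R) {h : ℝ} (hh : √2 * R < h) :
    ∃ z ∈ Set.Ioo 0 (h / 2), axialField R (z + h / 2) + axialField R (z - h / 2) = 0 := by
  have hs2 : 0 < √2 := Real.sqrt_pos.2 two_pos
  have hsq2 : √2 ^ 2 = 2 := Real.sq_sqrt zero_le_two
  -- `z₀` puts the nearer ring at axial offset `R/√2`, where `axialField R` peaks
  set z₀ := h / 2 - R / √2
  have hRh : R / √2 < h / 2 := by
    rw [div_lt_div_iff₀ hs2 two_pos]
    nlinarith
  have hz₀ : 0 < z₀ := sub_pos.2 hRh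
  have hneg : axialField R (z₀ + h / 2) + axialField R (z₀ - h / 2) < 0 := by
    rw [show z₀ - h / 2 = -(R / √2) by ring, axialField_neg, ← sub_eq_add_neg, sub_neg]
    refine axialField_lt_axialField (by positivity) (by field_simp; rw [hsq2]) (by linarith)
  have hpos : 0 < axialField R (h / 2 + h / 2) + axialField R (h / 2 - h / 2) := by
    have hh0 : 0 < h := lt_trans (by positivity) hh
    simp only [add_halves, sub_self, axialField, zero_div, add_zero]
    have : 0 < √(R ^ 2 + h ^ 2) := Real.sqrt_pos.2 (by positivity)
    positivity
  have hcont : Continuous fun z => axialField R (z + h / 2) + axialField R (z - h / 2) := by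
    have := continuous_axialField hR.ne'
    fun_prop
  obtain ⟨z, hz, hz0⟩ :=
    intermediate_value_Ioo (sub_le_self _ (by positivity)) hcont.continuousOn ⟨hneg, hpos⟩
  exact ⟨z, ⟨hz₀.trans hz.1, hz.2⟩, hz0⟩

end AxialProfile

section Coulomb

variable {F : Type*} [NormedAddCommGroup F] [InnerProductSpace ℝ F]

-- `innerSL ℝ` is typed as conjugate-linear in its first argument; this is the same map typed as
-- `ℝ`-bilinear, so that it can be added to other bilinear maps.
def realInnerSL : F →L[ℝ] F →L[ℝ] ℝ := innerSL ℝ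

@[simp] lemma realInnerSL_apply (v u : F) : realInnerSL v u = inner ℝ v u := rfl

def coulombGrad (c x : F) : F →L[ℝ] ℝ := -(‖x - c‖ ^ 3)⁻¹ • innerSL ℝ (x - c)

def coulombHess (c x : F) : F →L[ℝ] F →L[ℝ] ℝ :=
  (3 * (‖x - c‖ ^ 5)⁻¹) • (innerSL ℝ (x - c)).smulRight (innerSL ℝ (x - c))
    - (‖x - c‖ ^ 3)⁻¹ • realInnerSL

@[simp] lemma coulombGrad_apply (c x v : F) :
    coulombGrad c x v = -(‖x - c‖ ^ 3)⁻¹ * inner ℝ (x - c) v := rfl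

@[simp] lemma coulombHess_apply (c x v u : F) :
    coulombHess c x v u
      = 3 * (‖x - c‖ ^ 5)⁻¹ * inner ℝ (x - c) v * inner ℝ (x - c) u
        - (‖x - c‖ ^ 3)⁻¹ * inner ℝ v u := by
  simp only [coulombHess, sub_apply, smul_apply,
    ContinuousLinearMap.smulRight_apply, innerSL_apply_apply, realInnerSL_apply, smul_eq_mul]
  ring

variable {c x : F}

lemma hasFDerivAt_norm_sub (hx : x ≠ c) :
    HasFDerivAt (fun y => ‖y - c‖) (‖x - c‖⁻¹ • innerSL ℝ (x - c)) x := by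
  have hsq := ((hasFDerivAt_id x).sub_const c).norm_sq.sqrt
    (pow_ne_zero 2 (norm_ne_zero_iff.2 (sub_ne_zero.2 hx)))
  simp only [id, Real.sqrt_sq (norm_nonneg _)] at hsq
  refine hsq.congr_fderiv ?_
  ext v
  simp [field]

lemma hasFDerivAt_inv_norm_sub (hx : x ≠ c) :
    HasFDerivAt (fun y => ‖y - c‖⁻¹) (coulombGrad c x) x := by
  have hr : ‖x - c‖ ≠ 0 := norm_ne_zero_iff.2 (sub_ne_zero.2 hx)
  refine ((hasDerivAt_inv hr).comp_hasFDerivAt x (hasFDerivAt_norm_sub hx)).congr_fderiv ?_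
  ext v
  simp [coulombGrad, field]

lemma hasFDerivAt_coulombGrad (hx : x ≠ c) : HasFDerivAt (coulombGrad c) (coulombHess c x) x := by
  have hr : ‖x - c‖ ≠ 0 := norm_ne_zero_iff.2 (sub_ne_zero.2 hx)
  have hscalar := (((hasDerivAt_pow 3 ‖x - c‖).inv (pow_ne_zero 3 hr)).neg).comp_hasFDerivAt x
    (hasFDerivAt_norm_sub hx)
  have hvector : HasFDerivAt (fun y => realInnerSL (y - c)) realInnerSL x := by
    have := realInnerSL.hasFDerivAt.comp x ((hasFDerivAt_id x).sub_const c)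
    rwa [ContinuousLinearMap.comp_id] at this
  refine (hscalar.smul hvector).congr_fderiv ?_
  ext v u
  rw [coulombHess_apply]
  simp only [add_apply, smul_apply, ContinuousLinearMap.smulRight_apply, Function.comp_apply,
    realInnerSL_apply, coe_innerSL_apply, smul_eq_mul, Pi.neg_apply, Pi.inv_apply]
  field_simp
  ring

variable {ι : Type*} [Fintype ι] {p : ι → F}

lemma hasFDerivAt_sum_inv_norm_sub (hx : ∀ i, x ≠ p i) :
    HasFDerivAt (fun y => ∑ i, ‖y - p i‖⁻¹) (∑ i, coulombGrad (p i) x) x :=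
  HasFDerivAt.fun_sum fun i _ => hasFDerivAt_inv_norm_sub (hx i)

lemma fderiv_fderiv_sum_inv_norm_sub (hx : ∀ i, x ≠ p i) :
    fderiv ℝ (fderiv ℝ fun y => ∑ i, ‖y - p i‖⁻¹) x = ∑ i, coulombHess (p i) x := by
  have hopen : IsOpen (Set.range p)ᶜ := (Set.finite_range p).isClosed.isOpen_compl
  have hgrad :
      fderiv ℝ (fun y => ∑ i, ‖y - p i‖⁻¹) =ᶠ[nhds x] fun y => ∑ i, coulombGrad (p i) y := by
    filter_upwards [hopen.mem_nhds (by simpa [eq_comm] using hx)] with y hy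
    exact (hasFDerivAt_sum_inv_norm_sub fun i h => hy ⟨i, h.symm⟩).fderiv
  rw [hgrad.fderiv_eq]
  exact (HasFDerivAt.fun_sum fun i _ => hasFDerivAt_coulombGrad (hx i)).fderiv

end Coulomb

section Coordinates

@[simp] lemma pt_apply_zero (a b c : ℝ) : pt a b c 0 = a := rfl
@[simp] lemma pt_apply_one (a b c : ℝ) : pt a b c 1 = b := rfl
@[simp] lemma pt_apply_two (a b c : ℝ) : pt a b c 2 = c := rfl

lemma sub_pt (x : E3) (a b c : ℝ) : x - pt a b c = pt (x 0 - a) (x 1 - b) (x 2 - c) := by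
  ext i; fin_cases i <;> rfl

lemma norm_pt (a b c : ℝ) : ‖pt a b c‖ = √(a ^ 2 + b ^ 2 + c ^ 2) := by
  simp [EuclideanSpace.norm_eq, Fin.sum_univ_three]

lemma inner_eq_coords (v u : E3) : inner ℝ v u = v 0 * u 0 + v 1 * u 1 + v 2 * u 2 := by
  simp [PiLp.inner_apply, Fin.sum_univ_three, mul_comm]

end Coordinates

section Prism

variable {N : ℕ} {R : ℝ}

def ringCharge (N : ℕ) (R γ w : ℝ) (k : Fin N) : E3 :=
  pt (R * cos (2 * π * k / N + γ)) (R * sin (2 * π * k / N + γ)) w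

def prismCharge (N : ℕ) (R h β : ℝ) : Fin N ⊕ Fin N → E3 :=
  Sum.elim (ringCharge N R 0 (-(h / 2))) (ringCharge N R β (h / 2))

lemma Vprism_eq_sum (N : ℕ) (R h β : ℝ) :
    Vprism N R h β = fun x => ∑ i, ‖x - prismCharge N R h β i‖⁻¹ := by
  funext x
  simp only [Vprism, V0, prismCharge, Fintype.sum_sum_type, Sum.elim_inl, Sum.elim_inr, one_div,
    vert, ringCharge, sub_pt, norm_pt, pt_apply_zero, pt_apply_one, pt_apply_two, add_zero]
  congr 1
  · exact Finset.sum_congr rfl fun k _ => by ring_nf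
  · refine Finset.sum_congr rfl fun k _ => ?_
    set θ := 2 * π * k / N
    -- the rotation by `β` is an isometry of the horizontal plane
    rw [cos_add, sin_add]
    congr 2
    linear_combination (x 0 ^ 2 + x 1 ^ 2 - R ^ 2 * (cos θ ^ 2 + sin θ ^ 2)) * sin_sq_add_cos_sq β

lemma axis_sub_ringCharge (z γ w : ℝ) (k : Fin N) :
    pt 0 0 z - ringCharge N R γ w k
      = pt (-(R * cos (2 * π * k / N + γ))) (-(R * sin (2 * π * k / N + γ))) (z - w) := by
  simp [ringCharge, sub_pt]

lemma norm_axis_sub_ringCharge (z γ w : ℝ) (k : Fin N) :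
    ‖pt 0 0 z - ringCharge N R γ w k‖ = √(R ^ 2 + (z - w) ^ 2) := by
  rw [axis_sub_ringCharge, norm_pt]
  congr 1
  linear_combination R ^ 2 * sin_sq_add_cos_sq (2 * π * k / N + γ)

lemma axis_ne_prismCharge (hR : R ≠ 0) (h β z : ℝ) (i : Fin N ⊕ Fin N) :
    pt 0 0 z ≠ prismCharge N R h β i := by
  have hring : ∀ γ w (k : Fin N), pt 0 0 z ≠ ringCharge N R γ w k := by
    intro γ w k hk
    have := norm_axis_sub_ringCharge (R := R) z γ w k
    rw [hk, sub_self, norm_zero, eq_comm, Real.sqrt_eq_zero (by positivity)] at this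
    exact hR (pow_eq_zero_iff two_ne_zero |>.1 (by nlinarith))
  cases i <;> apply hring

end Prism

section AxisDerivatives

variable {N : ℕ} {R : ℝ}

lemma sum_coulombGrad_ringCharge (hN : 2 ≤ N) (γ w z : ℝ) (v : E3) :
    ∑ k, coulombGrad (ringCharge N R γ w k) (pt 0 0 z) v = -(N * axialField R (z - w) * v 2) := by
  have hterm : ∀ k : Fin N, coulombGrad (ringCharge N R γ w k) (pt 0 0 z) v
      = -(√(R ^ 2 + (z - w) ^ 2) ^ 3)⁻¹ * (-(R * v 0) * cos (2 * π * k / N + γ)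
        + -(R * v 1) * sin (2 * π * k / N + γ) + (z - w) * v 2) := by
    intro k
    rw [coulombGrad_apply, norm_axis_sub_ringCharge, axis_sub_ringCharge, inner_eq_coords]
    simp only [pt_apply_zero, pt_apply_one, pt_apply_two]
    ring
  rw [Fintype.sum_congr _ _ hterm, ← Finset.mul_sum, sum_trig_affine hN, axialField]
  ring

lemma sum_coulombHess_ringCharge (hN : 3 ≤ N) (γ w z : ℝ) (v u : E3) :
    ∑ k, coulombHess (ringCharge N R γ w k) (pt 0 0 z) v u
      = N * axialCurvature R (z - w) * (v 2 * u 2 - (v 0 * u 0 + v 1 * u 1) / 2) := by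
  set ρ := √(R ^ 2 + (z - w) ^ 2) with hρdef
  have hterm : ∀ k : Fin N, coulombHess (ringCharge N R γ w k) (pt 0 0 z) v u
      = 3 * (ρ ^ 5)⁻¹ * ((-(R * v 0) * cos (2 * π * k / N + γ)
          + -(R * v 1) * sin (2 * π * k / N + γ) + (z - w) * v 2)
        * (-(R * u 0) * cos (2 * π * k / N + γ)
          + -(R * u 1) * sin (2 * π * k / N + γ) + (z - w) * u 2))
        - (ρ ^ 3)⁻¹ * inner ℝ v u := by
    intro k
    rw [coulombHess_apply, norm_axis_sub_ringCharge, axis_sub_ringCharge, inner_eq_coords,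
      inner_eq_coords]
    simp only [pt_apply_zero, pt_apply_one, pt_apply_two]
    ring
  have hρ : (ρ ^ 3)⁻¹ = (R ^ 2 + (z - w) ^ 2) * (ρ ^ 5)⁻¹ := by
    rw [← Real.sq_sqrt (by positivity : 0 ≤ R ^ 2 + (z - w) ^ 2), ← hρdef]
    rcases eq_or_ne ρ 0 with hρ0 | hρ0
    · simp [hρ0]
    · field_simp
  rw [Fintype.sum_congr _ _ hterm, Finset.sum_sub_distrib, ← Finset.mul_sum, sum_trig_affine_mul hN,
    Finset.sum_const, Finset.card_univ, Fintype.card_fin, nsmul_eq_mul, hρ, inner_eq_coords,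
    axialCurvature, div_eq_mul_inv]
  ring

variable (N R) (h β : ℝ)

lemma fderiv_Vprism_axis (hN : 2 ≤ N) (hR : R ≠ 0) (z : ℝ) (v : E3) :
    fderiv ℝ (Vprism N R h β) (pt 0 0 z) v
      = -(N * (axialField R (z + h / 2) + axialField R (z - h / 2)) * v 2) := by
  rw [Vprism_eq_sum, (hasFDerivAt_sum_inv_norm_sub (axis_ne_prismCharge hR h β z)).fderiv,
    _root_.sum_apply, Fintype.sum_sum_type]
  simp only [prismCharge, Sum.elim_inl, Sum.elim_inr]
  rw [sum_coulombGrad_ringCharge hN, sum_coulombGrad_ringCharge hN, sub_neg_eq_add]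
  ring

lemma hess_Vprism_axis (hN : 3 ≤ N) (hR : R ≠ 0) (z : ℝ) (v u : E3) :
    hess (Vprism N R h β) (pt 0 0 z) v u
      = N * (axialCurvature R (z + h / 2) + axialCurvature R (z - h / 2))
        * (v 2 * u 2 - (v 0 * u 0 + v 1 * u 1) / 2) := by
  rw [hess, Vprism_eq_sum, fderiv_fderiv_sum_inv_norm_sub (axis_ne_prismCharge hR h β z),
    _root_.sum_apply, _root_.sum_apply, Fintype.sum_sum_type]
  simp only [prismCharge, Sum.elim_inl, Sum.elim_inr]
  rw [sum_coulombHess_ringCharge hN, sum_coulombHess_ringCharge hN, sub_neg_eq_add]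
  ring

end AxisDerivatives

section MorseIndex

variable {f : E3 → ℝ} {x : E3} {A C : ℝ}

lemma nondeg_of_hess_eq (hA : A ≠ 0) (hC : C ≠ 0)
    (hf : ∀ v u, hess f x v u = A * (v 0 * u 0 + v 1 * u 1) + C * (v 2 * u 2)) : Nondeg f x := by
  intro v hv hzero
  have hcoord : ∀ u : E3, A * (v 0 * u 0 + v 1 * u 1) + C * (v 2 * u 2) = 0 := fun u => by
    rw [← hf, hzero, zero_apply]
  have h0 := hcoord (pt 1 0 0)
  have h1 := hcoord (pt 0 1 0)
  have h2 := hcoord (pt 0 0 1)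
  simp only [pt_apply_zero, pt_apply_one, pt_apply_two, mul_one, mul_zero, add_zero, zero_add,
    mul_eq_zero, hA, hC, false_or] at h0 h1 h2
  exact hv (by ext i; fin_cases i <;> simpa)

lemma morseIndex_eq_one_of_hess_eq (hA : 0 < A) (hC : C < 0)
    (hf : ∀ v u, hess f x v u = A * (v 0 * u 0 + v 1 * u 1) + C * (v 2 * u 2)) :
    morseIndex f x = 1 := by
  refine IsGreatest.csSup_eq ⟨?_, ?_⟩
  · have he : pt 0 0 1 ≠ 0 := fun h => by simpa using congrArg (· 2) h
    refine ⟨Submodule.span ℝ {pt 0 0 1}, finrank_span_singleton he, fun v hv hv0 => ?_⟩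
    obtain ⟨t, rfl⟩ := Submodule.mem_span_singleton.1 hv
    have ht : t ≠ 0 := by rintro rfl; simp at hv0
    have hCt : C * (t * t) < 0 := mul_neg_of_neg_of_pos hC (mul_self_pos.2 ht)
    simp only [hf, PiLp.smul_apply, pt_apply_zero, pt_apply_one, pt_apply_two, smul_eq_mul]
    linarith
  · rintro k ⟨W, rfl, hneg⟩
    by_contra! hk
    -- a subspace of dimension `≥ 2` meets the horizontal plane, where the form is `≥ 0`
    have hker : LinearMap.ker ((EuclideanSpace.projₗ 2).domRestrict W) ≠ ⊥ :=
      LinearMap.ker_ne_bot_of_finrank_lt (by rw [Module.finrank_self]; exact hk)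
    obtain ⟨⟨v, hvW⟩, hv, hv0⟩ := Submodule.exists_mem_ne_zero_of_ne_bot hker
    have hv2 : v 2 = 0 := hv
    have hvne : v ≠ 0 := fun h => hv0 (Subtype.ext h)
    have := hneg v hvW hvne
    rw [hf, hv2] at this
    nlinarith [sq_nonneg (v 0), sq_nonneg (v 1)]

end MorseIndex

lemma Vprism_axis_saddle {N : ℕ} (hN : 3 ≤ N) {R : ℝ} (hR : R ≠ 0) (h β : ℝ) {z : ℝ}
    (hcrit : axialField R (z + h / 2) + axialField R (z - h / 2) = 0)
    (hcurv : axialCurvature R (z + h / 2) + axialCurvature R (z - h / 2) < 0) :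
    fderiv ℝ (Vprism N R h β) (pt 0 0 z) = 0 ∧ Nondeg (Vprism N R h β) (pt 0 0 z) ∧
      morseIndex (Vprism N R h β) (pt 0 0 z) = 1 := by
  set c := N * (axialCurvature R (z + h / 2) + axialCurvature R (z - h / 2))
  have hc : c < 0 := mul_neg_of_pos_of_neg (by positivity) hcurv
  have hhess : ∀ v u : E3, hess (Vprism N R h β) (pt 0 0 z) v u
      = -c / 2 * (v 0 * u 0 + v 1 * u 1) + c * (v 2 * u 2) := fun v u => by
    rw [hess_Vprism_axis N R h β hN hR]
    ring
  refine ⟨ContinuousLinearMap.ext fun v => ?_, nondeg_of_hess_eq (by linarith) hc.ne hhess,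
    morseIndex_eq_one_of_hess_eq (by linarith) hc hhess⟩
  rw [fderiv_Vprism_axis N R h β (by omega) hR, hcrit]
  simp

/-- if `h > √2 R`, then besides the origin there are two further
critical points of the potential of the `β`-rotated prism on the `x₃`-axis, one with
`z ∈ (0, h/2)` and one with `z ∈ (-h/2, 0)`, and both are 1-saddles. -/
theorem stmt11 (N : ℕ) (hN : 3 ≤ N) (β R h : ℝ) (hR : 0 < R)
    (hh : Real.sqrt 2 * R < h) :
    ∃ zp ∈ Set.Ioo (0 : ℝ) (h / 2), ∃ zm ∈ Set.Ioo (-(h / 2)) (0 : ℝ),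
      fderiv ℝ (Vprism N R h β) (pt 0 0 zp) = 0 ∧
      Nondeg (Vprism N R h β) (pt 0 0 zp) ∧
      morseIndex (Vprism N R h β) (pt 0 0 zp) = 1 ∧
      fderiv ℝ (Vprism N R h β) (pt 0 0 zm) = 0 ∧
      Nondeg (Vprism N R h β) (pt 0 0 zm) ∧
      morseIndex (Vprism N R h β) (pt 0 0 zm) = 1 := by
  obtain ⟨z, ⟨hz0, hzh⟩, hcrit⟩ := exists_axialField_add_eq_zero hR hh
  have hcurv : axialCurvature R (z + h / 2) + axialCurvature R (z - h / 2) < 0 := by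
    rw [show z - h / 2 = -(h / 2 - z) by ring, axialCurvature_neg]
    refine axialCurvature_add_neg_of_axialField_eq (by linarith) (by linarith)
      (fun h' => hz0.ne' (by linarith)) ?_
    rw [show z - h / 2 = -(h / 2 - z) by ring, axialField_neg] at hcrit
    linarith
  obtain ⟨hp₁, hp₂, hp₃⟩ := Vprism_axis_saddle hN hR.ne' h β hcrit hcurv
  obtain ⟨hm₁, hm₂, hm₃⟩ := Vprism_axis_saddle (z := -z) hN hR.ne' h β
    (by rw [axialField_reflect, hcrit, neg_zero]) (by rwa [axialCurvature_reflect])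
  exact ⟨z, ⟨hz0, hzh⟩, -z, ⟨by linarith, by linarith⟩, hp₁, hp₂, hp₃, hm₁, hm₂, hm₃⟩
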